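/- arXiv:2412.13449 — 3 statements merged into one kernel-verified Lean document; each statement's English description precedes it below -/
import Mathlib

section
/- Let f : E → E' be a covering of Brauer G-sets and let u, v be two walks of E with s(u) = s(v) or t(u) = t(v). Then u ≈ v if and only if f(u) ≈ f(v), where f(w) denotes the image walk of w under f. -/
namespace FB

/-- The data of a Brauer `G`-set for `G = ⟨g⟩` infinite cyclic:
a `ℤ`-set `E` (where `act n` is the action of `g^n`), a subset `U`,
an involution `tau` on `U` (encoded as a total map, junk outside `U`),
and a degree function `d`. -/
structure BrauerData where
  E : Type
  act : ℤ → E → E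
  U : Set E
  tau : E → E
  d : E → ℕ

namespace BrauerData

/-- The Nakayama automorphism `σ(e) = g^(d e) · e`. -/
def sigma (B : BrauerData) (e : B.E) : B.E := B.act (B.d e) e

/-- The axioms making the data a Brauer `G`-set. -/
structure IsBrauer (B : BrauerData) : Prop where
  act_zero : ∀ e, B.act 0 e = e
  act_add : ∀ (m n : ℤ) (e : B.E), B.act (m + n) e = B.act m (B.act n e)
  dpos : ∀ e, 0 < B.d e
  d_act : ∀ (n : ℤ) (e : B.E), B.d (B.act n e) = B.d e
  tau_mem : ∀ e ∈ B.U, B.tau e ∈ B.U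
  tau_invol : ∀ e ∈ B.U, B.tau (B.tau e) = e
  sigma_mem : ∀ e, e ∈ B.U ↔ B.sigma e ∈ B.U
  tau_sigma : ∀ e ∈ B.U, B.tau (B.sigma e) = B.sigma (B.tau e)

end BrauerData

/-- The letters of walks: `g`, `g⁻¹`, `τ`. -/
inductive Step : Type
  | g : Step
  | ginv : Step
  | tau : Step
  deriving DecidableEq

namespace BrauerData

/-- Apply one step. -/
def stepFun (B : BrauerData) : Step → B.E → B.E
  | Step.g, e => B.act 1 e
  | Step.ginv, e => B.act (-1) e
  | Step.tau, e => B.tau e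

/-- Terminal of the walk starting at `e` with steps `l` (listed in order of application). -/
def endpt (B : BrauerData) : B.E → List Step → B.E
  | e, [] => e
  | e, s :: l => B.endpt (B.stepFun s e) l

/-- The condition for a list of steps from `e` to be a walk:
both endpoints of a `τ`-step must lie in `U`. -/
def IsValid (B : BrauerData) : B.E → List Step → Prop
  | _, [] => True
  | e, s :: l => (s = Step.tau → e ∈ B.U ∧ B.tau e ∈ B.U) ∧ B.IsValid (B.stepFun s e) l

/-- A Brauer `G`-set is connected if any two half-edges are joined by a walk. -/
def Connected (B : BrauerData) : Prop :=
  ∀ x y : B.E, ∃ l : List Step, B.IsValid x l ∧ B.endpt x l = y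

/-- A closed walk at `e`. -/
def Closed (B : BrauerData) (e : B.E) (l : List Step) : Prop :=
  B.IsValid e l ∧ B.endpt e l = e

theorem endpt_append (B : BrauerData) (e : B.E) (l₁ l₂ : List Step) :
    B.endpt e (l₁ ++ l₂) = B.endpt (B.endpt e l₁) l₂ := by
  induction l₁ generalizing e with
  | nil => rfl
  | cons s l ih => simpa [endpt] using ih (B.stepFun s e)

theorem isValid_append (B : BrauerData) (e : B.E) (l₁ l₂ : List Step) :
    B.IsValid e (l₁ ++ l₂) ↔ B.IsValid e l₁ ∧ B.IsValid (B.endpt e l₁) l₂ := by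
  induction l₁ generalizing e with
  | nil => simp [IsValid, endpt]
  | cons s l ih =>
    simp only [List.cons_append, IsValid, endpt, List.append_eq, ih]
    tauto

end BrauerData

/-- The walk `g^n` (as a list of steps). -/
def gSteps (n : ℤ) : List Step :=
  if 0 ≤ n then List.replicate n.toNat Step.g else List.replicate (-n).toNat Step.ginv

/-- The homotopy relation `≈` on walks of a Brauer `G`-set, relative to a common
source `e`.  It is the equivalence relation generated by (mh1), (mh2), (mh3). -/
inductive Htp (B : BrauerData) : B.E → List Step → List Step → Prop
  | refl (e : B.E) (l : List Step) (h : B.IsValid e l) : Htp B e l l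
  | symm {e : B.E} {l₁ l₂ : List Step} : Htp B e l₁ l₂ → Htp B e l₂ l₁
  | trans {e : B.E} {l₁ l₂ l₃ : List Step} :
      Htp B e l₁ l₂ → Htp B e l₂ l₃ → Htp B e l₁ l₃
  | gginv (e : B.E) : Htp B e [Step.g, Step.ginv] []
  | ginvg (e : B.E) : Htp B e [Step.ginv, Step.g] []
  | tautau (e : B.E) (h : e ∈ B.U) : Htp B e [Step.tau, Step.tau] []
  | square (e : B.E) (h : e ∈ B.U) :
      Htp B e (List.replicate (B.d e) Step.g ++ [Step.tau])
              (Step.tau :: List.replicate (B.d (B.tau e)) Step.g)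
  | post {e : B.E} {l₁ l₂ : List Step} (u : List Step) (h : Htp B e l₁ l₂)
      (hu : B.IsValid (B.endpt e l₁) u) : Htp B e (l₁ ++ u) (l₂ ++ u)
  | pre {l₁ l₂ : List Step} (e : B.E) (v : List Step) (hv : B.IsValid e v)
      (h : Htp B (B.endpt e v) l₁ l₂) : Htp B e (v ++ l₁) (v ++ l₂)

/-- Morphisms of Brauer `G`-sets. -/
def IsMorphism (B B' : BrauerData) (f : B.E → B'.E) : Prop :=
  (∀ (n : ℤ) (e : B.E), f (B.act n e) = B'.act n (f e)) ∧
  (∀ e ∈ B.U, f e ∈ B'.U) ∧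
  (∀ e ∈ B.U, f (B.tau e) = B'.tau (f e)) ∧
  (∀ e, B'.d (f e) = B.d e)

/-- Coverings of Brauer `G`-sets. -/
def IsCovering (B B' : BrauerData) (f : B.E → B'.E) : Prop :=
  (∀ (n : ℤ) (e : B.E), f (B.act n e) = B'.act n (f e)) ∧
  (∀ e, e ∈ B.U ↔ f e ∈ B'.U) ∧
  (∀ e ∈ B.U, f (B.tau e) = B'.tau (f e)) ∧
  (∀ e, B'.d (f e) = B.d e)

/-- Isomorphisms of Brauer `G`-sets: invertible morphisms whose inverse is a morphism. -/
def IsIsoBrauer (B B' : BrauerData) : Prop :=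
  ∃ (f : B.E → B'.E) (h : B'.E → B.E), IsMorphism B B' f ∧ IsMorphism B' B h ∧
    (∀ x, h (f x) = x) ∧ (∀ y, f (h y) = y)

/-- Closed walks at a basepoint. -/
def ClosedWalk (B : BrauerData) (e : B.E) : Type := {l : List Step // B.Closed e l}

/-- Composition (concatenation) of closed walks. -/
def ClosedWalk.comp {B : BrauerData} {e : B.E} (w v : ClosedWalk B e) :
    ClosedWalk B e :=
  ⟨w.1 ++ v.1, by
    obtain ⟨hw1, hw2⟩ := w.2
    obtain ⟨hv1, hv2⟩ := v.2
    refine ⟨?_, ?_⟩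
    · rw [B.isValid_append]
      exact ⟨hw1, by rw [hw2]; exact hv1⟩
    · rw [B.endpt_append, hw2, hv2]⟩

/-- The fundamental group `Π_m(E, e)` of a Brauer `G`-set: homotopy classes of
closed walks at `e` (as a set; the group structure is given by `ClosedWalk.comp`). -/
def Pi1 (B : BrauerData) (e : B.E) : Type :=
  Quot (fun w v : ClosedWalk B e => Htp B e w.1 v.1)

/-- Walks from `x` to `y`. -/
def Walks (B : BrauerData) (x y : B.E) : Type :=
  {l : List Step // B.IsValid x l ∧ B.endpt x l = y}

/-- Composition (concatenation) of walks. -/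
def Walks.comp {B : BrauerData} {x y z : B.E} (u : Walks B x y) (v : Walks B y z) :
    Walks B x z :=
  ⟨u.1 ++ v.1, by
    obtain ⟨hu1, hu2⟩ := u.2
    obtain ⟨hv1, hv2⟩ := v.2
    refine ⟨?_, ?_⟩
    · rw [B.isValid_append]
      exact ⟨hu1, by rw [hu2]; exact hv1⟩
    · rw [B.endpt_append, hu2, hv2]⟩

/-- Hom-sets of the fundamental groupoid `Π_m(E, A)`: homotopy classes of walks
from `x` to `y`. -/
def WalkCls (B : BrauerData) (x y : B.E) : Type :=
  Quot (fun u v : Walks B x y => Htp B x u.1 v.1)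

/-- Composition in the fundamental groupoid. -/
def WalkCls.comp {B : BrauerData} {x y z : B.E} :
    WalkCls B x y → WalkCls B y z → WalkCls B x z := by
  refine Quot.lift (fun u => Quot.lift
      (fun v : Walks B y z => Quot.mk _ (u.comp v)) ?_) ?_
  · intro v₁ v₂ hv
    apply Quot.sound
    show Htp B x (u.1 ++ v₁.1) (u.1 ++ v₂.1)
    refine Htp.pre x u.1 u.2.1 ?_
    rw [u.2.2]
    exact hv
  · intro u₁ u₂ hu
    funext v
    induction v using Quot.ind with
    | _ v =>
      show Quot.mk _ (u₁.comp v) = Quot.mk _ (u₂.comp v)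
      apply Quot.sound
      show Htp B x (u₁.1 ++ v.1) (u₂.1 ++ v.1)
      refine Htp.post v.1 hu ?_
      rw [u₁.2.2]
      exact v.2.1

/-- `r` is the order of the Nakayama automorphism. -/
def IsOrderOf (B : BrauerData) (r : ℕ) : Prop :=
  0 < r ∧ (∀ x, B.sigma^[r] x = x) ∧
    ∀ j : ℕ, 0 < j → (∀ x, B.sigma^[j] x = x) → r ≤ j

/-- The reduced homotopy relation `≈'` (relative to the order `r` of the Nakayama
automorphism): `w ≈' v` iff `w ≈ (t w | g^(k·r·d(t w)) | t v) v` for some `k : ℤ`. -/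
def RedHtp (B : BrauerData) (r : ℕ) (e : B.E) (l₁ l₂ : List Step) : Prop :=
  ∃ k : ℤ, Htp B e l₁ (l₂ ++ gSteps (k * (r : ℤ) * (B.d (B.endpt e l₁) : ℤ)))

/-- One step of the `⟨σ⟩`-orbit relation. -/
def sigmaRel (B : BrauerData) (x y : B.E) : Prop := B.sigma x = y

/-- One step of the `G`-orbit (vertex) relation. -/
def vertexRel (B : BrauerData) (x y : B.E) : Prop := B.act 1 x = y

/-- Vertices of a Brauer `G`-set: the `G`-orbits. -/
def VertexQuot (B : BrauerData) : Type := Quot (vertexRel B)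

/-- Edges of a Brauer `G`-set: pairs `{e, τ e}` with `e ∈ U`, `τ e ≠ e`. -/
def EdgeQuot (B : BrauerData) : Type :=
  Quot (fun a b : {e : B.E // e ∈ B.U ∧ B.tau e ≠ e} => B.tau a.1 = b.1)

/-- Every vertex is finite and has integral f-degree. -/
def IntegralFDegree (B : BrauerData) : Prop :=
  ∀ e : B.E, ∃ m : ℕ, 0 < m ∧ B.act m e = e ∧
    (∀ j : ℕ, 0 < j → B.act j e = e → m ≤ j) ∧ m ∣ B.d e

/-- The group `⟨σ⟩` is admissible: no `⟨σ⟩`-orbit contains both half-edges of an edge. -/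
def SigmaAdmissible (B : BrauerData) : Prop :=
  ∀ e : B.E, ¬ Relation.EqvGen (sigmaRel B) e (B.tau e)

/-- The quotient `E/⟨σ⟩` of an `f_ms`-BG by the group generated by its
Nakayama automorphism. -/
def sigmaQuot (B : BrauerData) (hB : B.IsBrauer) (hU : B.U = Set.univ) : BrauerData where
  E := Quot (sigmaRel B)
  act := fun n => Quot.lift (fun x => Quot.mk (sigmaRel B) (B.act n x))
    (fun x y hxy => by
      apply Quot.sound
      unfold sigmaRel at *
      subst hxy
      show B.sigma (B.act n x) = B.act n (B.sigma x)
      unfold BrauerData.sigma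
      rw [hB.d_act, ← hB.act_add, ← hB.act_add, add_comm])
  U := Quot.mk (sigmaRel B) '' B.U
  tau := Quot.lift (fun x => Quot.mk (sigmaRel B) (B.tau x))
    (fun x y hxy => by
      apply Quot.sound
      unfold sigmaRel at *
      subst hxy
      show B.sigma (B.tau x) = B.tau (B.sigma x)
      exact (hB.tau_sigma x (by rw [hU]; trivial)).symm)
  d := Quot.lift B.d
    (fun x y hxy => by
      unfold sigmaRel at hxy
      subst hxy
      show B.d x = B.d (B.sigma x)
      unfold BrauerData.sigma
      rw [hB.d_act])

open Classical in
/-- The quotient `E/Π` of a Brauer `G`-set by a group `Π` of automorphisms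
(given by a group `Γ` acting by automorphisms via `ρ`). -/
noncomputable def quotData (B : BrauerData) (Γ : Type) [Group Γ]
    (ρ : Γ →* Equiv.Perm B.E) (hρ : ∀ γ : Γ, IsMorphism B B (ρ γ)) : BrauerData where
  E := Quot (fun x y : B.E => ∃ γ : Γ, ρ γ x = y)
  act := fun n => Quot.lift (fun x => Quot.mk _ (B.act n x))
    (fun x y hxy => by
      obtain ⟨γ, hγ⟩ := hxy
      exact Quot.sound ⟨γ, by rw [(hρ γ).1 n x, hγ]⟩)
  U := Quot.mk _ '' B.U
  tau := Quot.lift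
    (fun x => if x ∈ B.U then Quot.mk _ (B.tau x) else Quot.mk _ x)
    (fun x y hxy => by
      obtain ⟨γ, hγ⟩ := hxy
      try dsimp only
      by_cases hx : x ∈ B.U
      · have hy : y ∈ B.U := hγ ▸ (hρ γ).2.1 x hx
        rw [if_pos hx, if_pos hy]
        exact Quot.sound ⟨γ, by rw [(hρ γ).2.2.1 x hx, hγ]⟩
      · have hy : y ∉ B.U := by
          intro hy
          apply hx
          have h1 : ρ γ⁻¹ y ∈ B.U := (hρ γ⁻¹).2.1 y hy
          have h2 : ρ γ⁻¹ y = x := by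
            rw [← hγ, ← Equiv.Perm.mul_apply, ← map_mul, inv_mul_cancel, map_one,
              Equiv.Perm.one_apply]
          rwa [h2] at h1
        rw [if_neg hx, if_neg hy]
        exact Quot.sound ⟨γ, hγ⟩)
  d := Quot.lift B.d
    (fun x y hxy => by
      obtain ⟨γ, hγ⟩ := hxy
      rw [← hγ, (hρ γ).2.2.2 x])

open Classical in
/-- The double cover `Ê` of a Brauer `G`-set: two copies of `E`, with the
involution exchanging the copies at the fixed points of `τ`. -/
noncomputable def hatData (B : BrauerData) : BrauerData where
  E := B.E × Bool
  act := fun n p => (B.act n p.1, p.2)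
  U := {p | p.1 ∈ B.U}
  tau := fun p => if B.tau p.1 = p.1 then (p.1, !p.2) else (B.tau p.1, p.2)
  d := fun p => B.d p.1

section Restrict

variable (B : BrauerData) (hB : B.IsBrauer) (C : Set B.E)
  (hC : ∀ e : B.E, e ∈ C ↔ B.act (B.d e) e ∈ C)

open Classical in
/-- The first-return map forwards, on `E ∖ C`. -/
noncomputable def restrictFwd (x : {x : B.E // x ∉ C}) : {x : B.E // x ∉ C} :=
  have hex : ∃ N : ℕ, 0 < N ∧ B.act N x.1 ∉ C :=
    ⟨B.d x.1, hB.dpos x.1, fun hc => x.2 ((hC x.1).mpr hc)⟩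
  ⟨B.act (Nat.find hex) x.1, (Nat.find_spec hex).2⟩

open Classical in
/-- The first-return map backwards, on `E ∖ C`. -/
noncomputable def restrictBwd (x : {x : B.E // x ∉ C}) : {x : B.E // x ∉ C} :=
  have hex : ∃ N : ℕ, 0 < N ∧ B.act (-(N : ℤ)) x.1 ∉ C := by
    refine ⟨B.d x.1, hB.dpos x.1, fun hc => x.2 ?_⟩
    have h1 : B.act (B.d (B.act (-(B.d x.1 : ℤ)) x.1)) (B.act (-(B.d x.1 : ℤ)) x.1) ∈ C :=
      (hC _).mp hc
    rw [hB.d_act, ← hB.act_add] at h1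
    simpa [hB.act_zero] using h1
  ⟨B.act (-(Nat.find hex : ℤ)) x.1, (Nat.find_spec hex).2⟩

open Classical in
/-- The Brauer `G`-set structure on `E' = E ∖ C` (for `C ⊆ E ∖ U` stable under `σ`):
`g` acts by the first-return map, and the degree is corrected by the number of
deleted points passed. -/
noncomputable def restrictData (hCU : ∀ e ∈ C, e ∉ B.U) : BrauerData where
  E := {x : B.E // x ∉ C}
  act := fun n x =>
    if 0 ≤ n then (restrictFwd B hB C hC)^[n.toNat] x
    else (restrictBwd B hB C hC)^[(-n).toNat] x
  U := {x | x.1 ∈ B.U}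
  tau := fun x =>
    if h : x.1 ∈ B.U then ⟨B.tau x.1, fun hc => hCU _ hc (hB.tau_mem _ h)⟩ else x
  d := fun x => B.d x.1 - ((Finset.Ico 1 (B.d x.1)).filter fun i => B.act i x.1 ∈ C).card

end Restrict

section Lines

/-- The data of a doubly infinite walk. -/
structure Line (B : BrauerData) where
  pt : ℤ → B.E
  st : ℤ → Step

/-- The line condition: `pt i = (st i) (pt (i-1))`, and both endpoints of a
`τ`-step lie in `U`. -/
def Line.IsLine {B : BrauerData} (l : Line B) : Prop :=
  ∀ i : ℤ, (l.st i = Step.tau → l.pt (i - 1) ∈ B.U ∧ l.pt i ∈ B.U) ∧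
    l.pt i = B.stepFun (l.st i) (l.pt (i - 1))

/-- The `n`-th translate of a line. -/
def Line.translate {B : BrauerData} (l : Line B) (n : ℤ) : Line B :=
  ⟨fun i => l.pt (i + n), fun i => l.st (i + n)⟩

/-- The inverse of a step. -/
def Step.inv : Step → Step
  | Step.g => Step.ginv
  | Step.ginv => Step.g
  | Step.tau => Step.tau

/-- The inverse of a line. -/
def Line.inv {B : BrauerData} (l : Line B) : Line B :=
  ⟨fun i => l.pt (-i), fun i => (l.st (1 - i)).inv⟩

/-- A band: a periodic line of the alternating form
`⋯ τ g^{k_i} τ g^{-l_i} τ g^{k_{i+1}} ⋯` with `0 < k_i < d(e_i)`, `0 < l_i < d(h_i)`. -/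
def Line.IsBand {B : BrauerData} (l : Line B) : Prop :=
  l.IsLine ∧
  (∃ n : ℤ, 0 < n ∧ l.translate n = l) ∧
  (∃ i : ℤ, l.st i = Step.tau) ∧
  (∀ i : ℤ, l.st i = Step.tau → l.st (i + 1) ≠ Step.tau) ∧
  (∀ i : ℤ, l.st i = Step.g → l.st (i + 1) = Step.g ∨ l.st (i + 1) = Step.tau) ∧
  (∀ i : ℤ, l.st i = Step.ginv → l.st (i + 1) = Step.ginv ∨ l.st (i + 1) = Step.tau) ∧
  (∀ i : ℤ, l.st i = Step.g → l.st (i + 1) = Step.tau → l.st (i + 2) = Step.ginv) ∧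
  (∀ i : ℤ, l.st i = Step.ginv → l.st (i + 1) = Step.tau → l.st (i + 2) = Step.g) ∧
  (∀ (i : ℤ) (j : ℕ), l.st i = Step.tau → 0 < j →
    (∀ m : ℕ, 0 < m → m ≤ j → l.st (i + m) ≠ Step.tau) → j < B.d (l.pt i))

/-- One step of the equivalence relation on bands: translation or inversion. -/
def BandRel (B : BrauerData) (l₁ l₂ : Line B) : Prop :=
  (∃ n : ℤ, l₂ = l₁.translate n) ∨ l₂ = l₁.inv

/-- The set of equivalence classes of bands. -/
def BandClasses (B : BrauerData) : Type :=
  Quot (fun l₁ l₂ : {l : Line B // l.IsBand} => BandRel B l₁.1 l₂.1)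

end Lines

section Special

/-- Tail of a special walk: blocks `g^i` separated by single `τ`'s, with
`0 < i < d` for the inner blocks and `0 ≤ i < d` for the last block. -/
inductive SpecialTail (B : BrauerData) : B.E → List Step → Prop
  | last (e : B.E) (i : ℕ) (h : i < B.d e) :
      SpecialTail B e (List.replicate i Step.g)
  | cons (e : B.E) (i : ℕ) (h0 : 0 < i) (h : i < B.d e)
      (hU : B.act i e ∈ B.U) (hU' : B.tau (B.act i e) ∈ B.U) {l : List Step}
      (ht : SpecialTail B (B.tau (B.act i e)) l) :
      SpecialTail B e (List.replicate i Step.g ++ Step.tau :: l)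

/-- Special walks: `g^{i_k} τ g^{i_{k-1}} τ ⋯ τ g^{i_1} τ g^{i_0}` with
`0 ≤ i_0 < d(e_0)`, `0 ≤ i_k < d(e_k)` and `0 < i_l < d(e_l)` for `1 ≤ l ≤ k-1`. -/
inductive IsSpecial (B : BrauerData) : B.E → List Step → Prop
  | single (e : B.E) (i : ℕ) (h : i < B.d e) :
      IsSpecial B e (List.replicate i Step.g)
  | multi (e : B.E) (i : ℕ) (h : i < B.d e)
      (hU : B.act i e ∈ B.U) (hU' : B.tau (B.act i e) ∈ B.U) {l : List Step}
      (ht : SpecialTail B (B.tau (B.act i e)) l) :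
      IsSpecial B e (List.replicate i Step.g ++ Step.tau :: l)

end Special

end FB

namespace FB

section Aux

variable {B B' : BrauerData}

lemma covering_valid_iff (f : B.E → B'.E) (hf : IsCovering B B' f) :
    ∀ (l : List Step) (e : B.E), B.IsValid e l ↔ B'.IsValid (f e) l := by
  intro l
  induction l with
  | nil => intro e; simp [BrauerData.IsValid]
  | cons s l ih =>
    intro e
    cases s with
    | g =>
      simp only [BrauerData.IsValid, BrauerData.stepFun]
      rw [← hf.1 1 e, ← ih]
      simp
    | ginv =>
      simp only [BrauerData.IsValid, BrauerData.stepFun]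
      rw [← hf.1 (-1) e, ← ih]
      simp
    | tau =>
      simp only [BrauerData.IsValid, BrauerData.stepFun]
      constructor
      · rintro ⟨hc, ht⟩
        obtain ⟨he, hte⟩ := hc (by trivial)
        refine ⟨fun _ => ⟨(hf.2.1 e).mp he, ?_⟩, ?_⟩
        · rw [← hf.2.2.1 e he]; exact (hf.2.1 _).mp hte
        · rw [← hf.2.2.1 e he]; exact (ih _).mp ht
      · rintro ⟨hc, ht⟩
        obtain ⟨he, hte⟩ := hc (by trivial)
        have heU : e ∈ B.U := (hf.2.1 e).mpr he
        have hteU : B.tau e ∈ B.U := by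
          rw [hf.2.1, hf.2.2.1 e heU]; exact hte
        refine ⟨fun _ => ⟨heU, hteU⟩, ?_⟩
        rw [ih, hf.2.2.1 e heU]
        exact ht

lemma covering_map_endpt (f : B.E → B'.E) (hf : IsCovering B B' f) :
    ∀ (l : List Step) (e : B.E), B.IsValid e l →
      f (B.endpt e l) = B'.endpt (f e) l := by
  intro l
  induction l with
  | nil => intro e _; rfl
  | cons s l ih =>
    intro e hv
    have hstep : f (B.stepFun s e) = B'.stepFun s (f e) := by
      cases s with
      | g => exact hf.1 1 e
      | ginv => exact hf.1 (-1) e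
      | tau => exact hf.2.2.1 e (hv.1 rfl).1
    show f (B.endpt (B.stepFun s e) l) = B'.endpt (B'.stepFun s (f e)) l
    rw [← hstep]
    exact ih _ hv.2

lemma endpt_replicate_g (hB : B.IsBrauer) :
    ∀ (n : ℕ) (e : B.E), B.endpt e (List.replicate n Step.g) = B.act n e := by
  intro n
  induction n with
  | zero => intro e; simpa [BrauerData.endpt] using (hB.act_zero e).symm
  | succ n ih =>
    intro e
    show B.endpt (B.stepFun Step.g e) (List.replicate n Step.g) = B.act (n + 1 : ℕ) e
    rw [ih]
    show B.act n (B.act 1 e) = B.act (n + 1 : ℕ) e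
    rw [← hB.act_add]
    norm_num

lemma isValid_replicate_g : ∀ (n : ℕ) (e : B.E),
    B.IsValid e (List.replicate n Step.g) := by
  intro n
  induction n with
  | zero => intro e; trivial
  | succ n ih => intro e; exact ⟨by simp, ih _⟩

lemma htp_valid_endpt (hB : B.IsBrauer) {e : B.E} {l₁ l₂ : List Step}
    (h : Htp B e l₁ l₂) :
    B.IsValid e l₁ ∧ B.IsValid e l₂ ∧ B.endpt e l₁ = B.endpt e l₂ := by
  induction h with
  | refl e l h => exact ⟨h, h, rfl⟩
  | symm h ih => exact ⟨ih.2.1, ih.1, ih.2.2.symm⟩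
  | trans h1 h2 ih1 ih2 => exact ⟨ih1.1, ih2.2.1, ih1.2.2.trans ih2.2.2⟩
  | gginv e =>
    refine ⟨⟨by simp, by simp, trivial⟩, trivial, ?_⟩
    show B.act (-1) (B.act 1 e) = e
    rw [← hB.act_add]
    simpa using hB.act_zero e
  | ginvg e =>
    refine ⟨⟨by simp, by simp, trivial⟩, trivial, ?_⟩
    show B.act 1 (B.act (-1) e) = e
    rw [← hB.act_add]
    simpa using hB.act_zero e
  | tautau e h =>
    have ht : B.tau e ∈ B.U := hB.tau_mem e h
    have hinv : B.tau (B.tau e) = e := hB.tau_invol e h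
    have h2 : B.tau (B.tau e) ∈ B.U := by rw [hinv]; exact h
    exact ⟨⟨fun _ => ⟨h, ht⟩, fun _ => ⟨ht, h2⟩, trivial⟩, trivial, hinv⟩
  | square e h =>
    have hσ : B.sigma e ∈ B.U := (hB.sigma_mem e).mp h
    have hτ : B.tau e ∈ B.U := hB.tau_mem e h
    have hτσ : B.tau (B.sigma e) ∈ B.U := hB.tau_mem _ hσ
    refine ⟨?_, ?_, ?_⟩
    · rw [B.isValid_append]
      refine ⟨isValid_replicate_g _ _, ?_⟩
      rw [endpt_replicate_g hB]
      exact ⟨fun _ => ⟨hσ, hτσ⟩, trivial⟩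
    · exact ⟨fun _ => ⟨h, hτ⟩, isValid_replicate_g _ _⟩
    · rw [B.endpt_append, endpt_replicate_g hB]
      show B.tau (B.sigma e) = B.endpt (B.tau e) (List.replicate (B.d (B.tau e)) Step.g)
      rw [endpt_replicate_g hB, hB.tau_sigma e h]
      rfl
  | post u h hu ih =>
    refine ⟨?_, ?_, ?_⟩
    · rw [B.isValid_append]; exact ⟨ih.1, hu⟩
    · rw [B.isValid_append]; exact ⟨ih.2.1, ih.2.2 ▸ hu⟩
    · rw [B.endpt_append, B.endpt_append, ih.2.2]
  | pre e v hv h ih =>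
    refine ⟨?_, ?_, ?_⟩
    · rw [B.isValid_append]; exact ⟨hv, ih.1⟩
    · rw [B.isValid_append]; exact ⟨hv, ih.2.1⟩
    · rw [B.endpt_append, B.endpt_append, ih.2.2]

lemma htp_map (hB : B.IsBrauer) (f : B.E → B'.E) (hf : IsCovering B B' f)
    {e : B.E} {l₁ l₂ : List Step} (h : Htp B e l₁ l₂) : Htp B' (f e) l₁ l₂ := by
  induction h with
  | refl e l h => exact Htp.refl _ _ ((covering_valid_iff f hf l e).mp h)
  | symm h ih => exact ih.symm
  | trans h1 h2 ih1 ih2 => exact ih1.trans ih2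
  | gginv e => exact Htp.gginv _
  | ginvg e => exact Htp.ginvg _
  | tautau e h => exact Htp.tautau _ ((hf.2.1 e).mp h)
  | square e h =>
    have h' : f e ∈ B'.U := (hf.2.1 e).mp h
    have hd : B'.d (f e) = B.d e := hf.2.2.2 e
    have hd2 : B'.d (B'.tau (f e)) = B.d (B.tau e) := by
      rw [← hf.2.2.1 e h, hf.2.2.2]
    have hsq := Htp.square (B := B') (f e) h'
    rwa [hd, hd2] at hsq
  | post u h hu ih =>
    refine Htp.post u ih ?_
    rw [← covering_map_endpt f hf _ _ (htp_valid_endpt hB h).1]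
    exact (covering_valid_iff f hf u _).mp hu
  | pre e v hv h ih =>
    refine Htp.pre (f e) v ((covering_valid_iff f hf v e).mp hv) ?_
    rwa [← covering_map_endpt f hf _ _ hv]

lemma htp_lift (hB' : B'.IsBrauer) (f : B.E → B'.E) (hf : IsCovering B B' f)
    {e' : B'.E} {l₁ l₂ : List Step} (h : Htp B' e' l₁ l₂) :
    ∀ y : B.E, f y = e' → B.IsValid y l₁ → Htp B y l₁ l₂ := by
  induction h with
  | refl e l h => exact fun y _ hv => Htp.refl y l hv
  | symm h ih =>
    intro y hy hv
    have hv1 := (covering_valid_iff f hf _ y).mpr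
      (by rw [hy]; exact (htp_valid_endpt hB' h).1)
    exact (ih y hy hv1).symm
  | trans h1 h2 ih1 ih2 =>
    intro y hy hv
    have hv2 := (covering_valid_iff f hf _ y).mpr
      (by rw [hy]; exact (htp_valid_endpt hB' h1).2.1)
    exact (ih1 y hy hv).trans (ih2 y hy hv2)
  | gginv e => exact fun y _ _ => Htp.gginv y
  | ginvg e => exact fun y _ _ => Htp.ginvg y
  | tautau e h =>
    intro y hy _
    exact Htp.tautau y ((hf.2.1 y).mpr (hy ▸ h))
  | square e h =>
    intro y hy _
    have hyU : y ∈ B.U := (hf.2.1 y).mpr (hy ▸ h)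
    have hd : B'.d e = B.d y := by rw [← hy, hf.2.2.2]
    have hd2 : B'.d (B'.tau e) = B.d (B.tau y) := by
      rw [← hy, ← hf.2.2.1 y hyU, hf.2.2.2]
    rw [hd, hd2]
    exact Htp.square y hyU
  | post u h hu ih =>
    intro y hy hv
    rw [B.isValid_append] at hv
    exact Htp.post u (ih y hy hv.1) hv.2
  | pre e v hv h ih =>
    intro y hy hval
    rw [B.isValid_append] at hval
    refine Htp.pre y v hval.1 (ih _ ?_ hval.2)
    rw [covering_map_endpt f hf v y hval.1, hy]

lemma endpt_inj (hB : B.IsBrauer) : ∀ (l : List Step) (x y : B.E),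
    B.IsValid x l → B.IsValid y l → B.endpt x l = B.endpt y l → x = y := by
  intro l
  induction l with
  | nil => intro x y _ _ h; exact h
  | cons s l ih =>
    intro x y hx hy h
    have hstep : B.stepFun s x = B.stepFun s y := ih _ _ hx.2 hy.2 h
    cases s with
    | g =>
      have h0 : B.act (-1 + 1) x = B.act (-1 + 1) y := by
        rw [hB.act_add, hB.act_add]; exact congrArg _ hstep
      simpa [show ((-1 : ℤ) + 1) = 0 from by norm_num, hB.act_zero] using h0
    | ginv =>
      have h0 : B.act (1 + -1) x = B.act (1 + -1) y := by
        rw [hB.act_add, hB.act_add]; exact congrArg _ hstep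
      simpa [show ((1 : ℤ) + -1) = 0 from by norm_num, hB.act_zero] using h0
    | tau =>
      obtain ⟨hxU, -⟩ := hx.1 rfl
      obtain ⟨hyU, -⟩ := hy.1 rfl
      have hstep' : B.tau x = B.tau y := hstep
      rw [← hB.tau_invol x hxU, hstep', hB.tau_invol y hyU]

end Aux

/-- homotopy lifting along a covering.
Let `f : E → E'` be a covering of Brauer `G`-sets and `u = (x₁, l₁)`, `v = (x₂, l₂)`
two walks of `E` with `s(u) = s(v)` or `t(u) = t(v)`.  Then `u ≈ v` if and only if
`f(u) ≈ f(v)` (the image walk under `f` has source `f xᵢ` and the same step word,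
and homotopic walks share their source). -/
theorem covering_homotopy_lifting (B B' : BrauerData) (hB : B.IsBrauer)
    (hB' : B'.IsBrauer) (f : B.E → B'.E) (hf : IsCovering B B' f)
    (x₁ x₂ : B.E) (l₁ l₂ : List Step)
    (h₁ : B.IsValid x₁ l₁) (h₂ : B.IsValid x₂ l₂)
    (hends : x₁ = x₂ ∨ B.endpt x₁ l₁ = B.endpt x₂ l₂) :
    (x₁ = x₂ ∧ Htp B x₁ l₁ l₂) ↔ (f x₁ = f x₂ ∧ Htp B' (f x₁) l₁ l₂) := by
  constructor
  · rintro ⟨rfl, h⟩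
    exact ⟨rfl, htp_map hB f hf h⟩
  · rintro ⟨hfx, h⟩
    have key : Htp B x₁ l₁ l₂ := htp_lift hB' f hf h x₁ rfl h₁
    rcases hends with rfl | hend
    · exact ⟨rfl, key⟩
    · have hprop := htp_valid_endpt hB key
      have he : B.endpt x₁ l₂ = B.endpt x₂ l₂ := by
        rw [← hprop.2.2, hend]
      have hx : x₁ = x₂ := endpt_inj hB l₂ x₁ x₂ hprop.2.1 h₂ he
      exact ⟨hx, key⟩

end FB
end

section
/- Let E = (E, U, τ, d) be a Brauer G-set such that τ has a fixed point. Define Ê = E₁ ⊔ E₂, the disjoint union of two copies of E as a G-set (writing e_i for the element e in copy i), Û = U₁ ⊔ U₂, τ̂(e_i) = (τ(e))_i if τ(e) ≠ e and τ̂(e_i) = e_{3−i} if τ(e) = e, and d̂(e_i) = d(e). Then Ê = (Ê, Û, τ̂, d̂) is a Brauer G-set whose involution τ̂ has no fixed points, and the map π : Ê → E, e_i ↦ e, is a covering of Brauer G-sets. -/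
namespace FB

/-- If `E = (E,U,τ,d)` is a Brauer `G`-set whose involution `τ` has a
fixed point, then the double `Ê` (two copies of `E`, with `τ̂` exchanging the copies at
the fixed points of `τ`) is a Brauer `G`-set whose involution has no fixed point, and
the natural projection `π : Ê → E` is a covering of Brauer `G`-sets. -/
theorem hat_is_brauer_and_projection_is_covering (B : BrauerData) (hB : B.IsBrauer)
    (hfix : ∃ e ∈ B.U, B.tau e = e) :
    (hatData B).IsBrauer ∧
    (∀ p ∈ (hatData B).U, (hatData B).tau p ≠ p) ∧
    IsCovering (hatData B) B (fun p => p.1) := by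
  classical
  -- key lemma: for e ∈ U, τ(σ e) = σ e ↔ τ e = e
  have key : ∀ e ∈ B.U, (B.tau (B.sigma e) = B.sigma e ↔ B.tau e = e) := by
    intro e he
    constructor
    · intro h
      rw [hB.tau_sigma e he] at h
      have hd : B.d (B.tau e) = B.d e := by
        have := congrArg B.d h
        unfold BrauerData.sigma at this
        rwa [hB.d_act, hB.d_act] at this
      unfold BrauerData.sigma at h
      rw [hd] at h
      have := congrArg (B.act (-(B.d e : ℤ))) h
      rwa [← hB.act_add, ← hB.act_add, neg_add_cancel, hB.act_zero, hB.act_zero] at this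
    · intro h
      rw [hB.tau_sigma e he, h]
  refine ⟨?_, ?_, ?_⟩
  · constructor
    · intro e; show (B.act 0 e.1, e.2) = e
      exact Prod.ext (hB.act_zero e.1) rfl
    · intro m n e; show (B.act (m + n) e.1, e.2) = _
      rw [hB.act_add]; rfl
    · intro e; exact hB.dpos e.1
    · intro n e; exact hB.d_act n e.1
    · intro e he
      show (if B.tau e.1 = e.1 then (e.1, !e.2) else (B.tau e.1, e.2)) ∈ {p : B.E × Bool | p.1 ∈ B.U}
      by_cases h : B.tau e.1 = e.1
      · rw [if_pos h]; exact he
      · rw [if_neg h]; exact hB.tau_mem e.1 he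
    · intro e he
      show (hatData B).tau (if B.tau e.1 = e.1 then (e.1, !e.2) else (B.tau e.1, e.2)) = e
      by_cases h : B.tau e.1 = e.1
      · erw [if_pos h]
        show (if B.tau e.1 = e.1 then (e.1, !!e.2) else (B.tau e.1, !e.2)) = e
        rw [if_pos h]
        exact Prod.ext rfl (Bool.not_not e.2)
      · erw [if_neg h]
        show (if B.tau (B.tau e.1) = B.tau e.1 then ((B.tau e.1), !e.2)
            else (B.tau (B.tau e.1), e.2)) = e
        rw [hB.tau_invol e.1 he, if_neg (fun hc => h hc.symm)]
        rfl
    · intro e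
      show e.1 ∈ B.U ↔ B.act (B.d e.1) e.1 ∈ B.U
      exact hB.sigma_mem e.1
    · intro e he
      show (hatData B).tau (B.act (B.d e.1) e.1, e.2) = _
      have hmem : B.sigma e.1 ∈ B.U := (hB.sigma_mem e.1).mp he
      by_cases h : B.tau e.1 = e.1
      · have h2 : B.tau (B.sigma e.1) = B.sigma e.1 := (key e.1 he).mpr h
        show (if B.tau (B.sigma e.1) = B.sigma e.1 then (B.sigma e.1, !e.2)
            else (B.tau (B.sigma e.1), e.2)) = (hatData B).sigma ((hatData B).tau e)
        rw [if_pos h2]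
        show _ = (hatData B).sigma (if B.tau e.1 = e.1 then (e.1, !e.2) else (B.tau e.1, e.2))
        erw [if_pos h]
        rfl
      · have h2 : B.tau (B.sigma e.1) ≠ B.sigma e.1 := fun hc => h ((key e.1 he).mp hc)
        show (if B.tau (B.sigma e.1) = B.sigma e.1 then (B.sigma e.1, !e.2)
            else (B.tau (B.sigma e.1), e.2)) = (hatData B).sigma ((hatData B).tau e)
        rw [if_neg h2]
        show _ = (hatData B).sigma (if B.tau e.1 = e.1 then (e.1, !e.2) else (B.tau e.1, e.2))
        erw [if_neg h]
        show (B.tau (B.sigma e.1), e.2) = (B.sigma (B.tau e.1), e.2)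
        rw [hB.tau_sigma e.1 he]
  · intro p hp
    show (if B.tau p.1 = p.1 then (p.1, !p.2) else (B.tau p.1, p.2)) ≠ p
    by_cases h : B.tau p.1 = p.1
    · rw [if_pos h]
      intro hc
      have := congrArg Prod.snd hc
      simp at this
    · rw [if_neg h]
      intro hc
      exact h (congrArg Prod.fst hc)
  · refine ⟨fun n e => rfl, fun e => Iff.rfl, ?_, fun e => rfl⟩
    intro e he
    show (if B.tau e.1 = e.1 then (e.1, !e.2) else (B.tau e.1, e.2)).1 = B.tau e.1
    by_cases h : B.tau e.1 = e.1
    · rw [if_pos h]; exact h.symm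
    · rw [if_neg h]

end FB
end

section
/- Let E = (E, U, τ, d) be a Brauer G-set and Π a finite group of automorphisms of E of order n. Then the number of equivalence classes of bands of E is finite if and only if the number of equivalence classes of bands of E/Π is finite, and in that case N_{E/Π} ≤ N_E ≤ n·N_{E/Π}, where N_X denotes the number of equivalence classes of bands of X. -/
namespace FB


/-! ### Auxiliary lemmas for Statement 6 -/

section BandAux

variable {B : BrauerData}

theorem Line.ext' {l₁ l₂ : Line B} (hpt : ∀ i, l₁.pt i = l₂.pt i)
    (hst : ∀ i, l₁.st i = l₂.st i) : l₁ = l₂ := by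
  cases l₁; cases l₂
  simp only [Line.mk.injEq]
  exact ⟨funext hpt, funext hst⟩

theorem act_act (hB : B.IsBrauer) (m n : ℤ) (e : B.E) :
    B.act m (B.act n e) = B.act (m + n) e := (hB.act_add m n e).symm

theorem act_cancel (hB : B.IsBrauer) (m : ℤ) (e : B.E) :
    B.act (-m) (B.act m e) = e := by
  rw [act_act hB, neg_add_cancel, hB.act_zero]

theorem act_cancel' (hB : B.IsBrauer) (m : ℤ) (e : B.E) :
    B.act m (B.act (-m) e) = e := by
  rw [act_act hB, add_neg_cancel, hB.act_zero]

/-- The inverse of a single step, as a function on half-edges. -/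
def prevFun (B : BrauerData) : Step → B.E → B.E
  | Step.g, e => B.act (-1) e
  | Step.ginv, e => B.act 1 e
  | Step.tau, e => B.tau e

theorem line_prev (hB : B.IsBrauer) {l : Line B} (hl : l.IsLine) (i : ℤ) :
    l.pt (i - 1) = prevFun B (l.st i) (l.pt i) := by
  obtain ⟨h1, h2⟩ := hl i
  cases hs : l.st i with
  | g =>
    rw [hs] at h2
    rw [h2]
    exact (act_cancel hB 1 _).symm
  | ginv =>
    rw [hs] at h2
    rw [h2]
    exact (act_cancel' hB 1 _).symm
  | tau =>
    obtain ⟨ha, _⟩ := h1 hs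
    rw [hs] at h2
    rw [h2]
    exact (hB.tau_invol _ ha).symm

theorem line_unique (hB : B.IsBrauer) {l₁ l₂ : Line B}
    (h₁ : l₁.IsLine) (h₂ : l₂.IsLine) (hst : ∀ i, l₁.st i = l₂.st i)
    (h0 : l₁.pt 0 = l₂.pt 0) : l₁ = l₂ := by
  refine Line.ext' (fun i => ?_) hst
  induction i using Int.induction_on with
  | zero => exact h0
  | succ k ih =>
    rw [(h₁ (k + 1)).2, (h₂ (k + 1)).2, hst, add_sub_cancel_right, ih]
  | pred k ih =>
    have e1 := line_prev hB h₁ (-(k : ℤ))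
    have e2 := line_prev hB h₂ (-(k : ℤ))
    rw [show -(k : ℤ) - 1 = -(k : ℤ) - 1 from rfl] at e1 e2
    rw [e1, e2, hst, ih]

theorem translate_zero (l : Line B) : l.translate 0 = l :=
  Line.ext' (fun i => by simp [Line.translate]) (fun i => by simp [Line.translate])

theorem translate_translate (l : Line B) (a b : ℤ) :
    (l.translate a).translate b = l.translate (a + b) := by
  refine Line.ext' (fun i => ?_) (fun i => ?_)
  · show l.pt (i + b + a) = l.pt (i + (a + b))
    congr 1; ring
  · show l.st (i + b + a) = l.st (i + (a + b))
    congr 1; ring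

theorem Step.inv_inv' (s : Step) : s.inv.inv = s := by cases s <;> rfl

theorem Step.inv_eq_tau {s : Step} : s.inv = Step.tau ↔ s = Step.tau := by
  cases s <;> simp [Step.inv]

theorem Step.inv_eq_g {s : Step} : s.inv = Step.g ↔ s = Step.ginv := by
  cases s <;> simp [Step.inv]

theorem Step.inv_eq_ginv {s : Step} : s.inv = Step.ginv ↔ s = Step.g := by
  cases s <;> simp [Step.inv]

theorem inv_inv (l : Line B) : l.inv.inv = l := by
  refine Line.ext' (fun i => ?_) (fun i => ?_)
  · show l.pt (-(-i)) = l.pt i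
    congr 1; ring
  · show ((l.st (1 - (1 - i))).inv).inv = l.st i
    rw [Step.inv_inv']
    congr 1; ring

theorem inv_translate (l : Line B) (n : ℤ) :
    (l.translate n).inv = l.inv.translate (-n) := by
  refine Line.ext' (fun i => ?_) (fun i => ?_)
  · show l.pt (-i + n) = l.pt (-(i + -n))
    congr 1; ring
  · show (l.st (1 - i + n)).inv = (l.st (1 - (i + -n))).inv
    congr 2; ring

theorem periodic_pt {l : Line B} {n : ℤ} (h : l.translate n = l) (i : ℤ) :
    l.pt (i + n) = l.pt i := congrFun (congrArg Line.pt h) i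

theorem periodic_st {l : Line B} {n : ℤ} (h : l.translate n = l) (i : ℤ) :
    l.st (i + n) = l.st i := congrFun (congrArg Line.st h) i

theorem periodic_st_sub_mul {l : Line B} {n : ℤ} (h : l.translate n = l) (i : ℤ) :
    ∀ k : ℕ, l.st (i - k * n) = l.st i := by
  intro k
  induction k with
  | zero => simp
  | succ m ih =>
    have : i - (m + 1 : ℕ) * n + n = i - m * n := by push_cast; ring
    rw [← ih, ← periodic_st h (i - (m + 1 : ℕ) * n), this]

theorem isLine_translate {l : Line B} (hl : l.IsLine) (n : ℤ) :
    (l.translate n).IsLine := by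
  intro i
  obtain ⟨h1, h2⟩ := hl (i + n)
  refine ⟨fun hs => ?_, ?_⟩
  · obtain ⟨ha, hb⟩ := h1 hs
    refine ⟨?_, hb⟩
    show l.pt (i - 1 + n) ∈ B.U
    rw [show i - 1 + n = i + n - 1 by ring]
    exact ha
  · show l.pt (i + n) = B.stepFun (l.st (i + n)) (l.pt (i - 1 + n))
    rw [show i - 1 + n = i + n - 1 by ring]
    exact h2

theorem isBand_translate {l : Line B} (hl : l.IsBand) (a : ℤ) :
    (l.translate a).IsBand := by
  obtain ⟨h1, ⟨p, hp, hper⟩, ⟨i0, hi0⟩, h4, h5, h6, h7, h8, h9⟩ := hl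
  refine ⟨isLine_translate h1 a, ⟨p, hp, ?_⟩, ⟨i0 - a, ?_⟩, ?_, ?_, ?_, ?_, ?_, ?_⟩
  · rw [translate_translate, add_comm, ← translate_translate, hper]
  · show l.st (i0 - a + a) = Step.tau
    rwa [sub_add_cancel]
  · intro i hi
    have := h4 (i + a) hi
    show l.st (i + 1 + a) ≠ Step.tau
    rwa [show i + 1 + a = i + a + 1 by ring]
  · intro i hi
    have := h5 (i + a) hi
    show l.st (i + 1 + a) = Step.g ∨ l.st (i + 1 + a) = Step.tau
    rwa [show i + 1 + a = i + a + 1 by ring]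
  · intro i hi
    have := h6 (i + a) hi
    show l.st (i + 1 + a) = Step.ginv ∨ l.st (i + 1 + a) = Step.tau
    rwa [show i + 1 + a = i + a + 1 by ring]
  · intro i hi hi1
    have := h7 (i + a) hi (by rwa [show i + a + 1 = i + 1 + a by ring])
    show l.st (i + 2 + a) = Step.ginv
    rwa [show i + 2 + a = i + a + 2 by ring]
  · intro i hi hi1
    have := h8 (i + a) hi (by rwa [show i + a + 1 = i + 1 + a by ring])
    show l.st (i + 2 + a) = Step.g
    rwa [show i + 2 + a = i + a + 2 by ring]
  · intro i j hi hj hm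
    have := h9 (i + a) j hi hj (fun m hm0 hmj => by
      have := hm m hm0 hmj
      show l.st (i + a + m) ≠ Step.tau
      rwa [show i + a + (m : ℤ) = i + m + a by ring] )
    exact this

end BandAux

section BandAux2

variable {B : BrauerData}

theorem isLine_inv (hB : B.IsBrauer) {l : Line B} (hl : l.IsLine) :
    l.inv.IsLine := by
  intro i
  obtain ⟨h1, h2⟩ := hl (1 - i)
  constructor
  · intro hs
    rw [show l.inv.st i = (l.st (1 - i)).inv from rfl, Step.inv_eq_tau] at hs
    obtain ⟨ha, hb⟩ := h1 hs
    refine ⟨?_, ?_⟩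
    · show l.pt (-(i - 1)) ∈ B.U
      rwa [show -(i - 1) = 1 - i by ring]
    · show l.pt (-i) ∈ B.U
      rwa [show -i = 1 - i - 1 by ring] 
  · show l.pt (-i) = B.stepFun ((l.st (1 - i)).inv) (l.pt (-(i - 1)))
    rw [show -i = 1 - i - 1 by ring, show -(i - 1) = 1 - i by ring]
    cases hs : l.st (1 - i) with
    | g =>
      rw [hs] at h2
      rw [h2]
      show l.pt (1 - i - 1) = B.act (-1) (B.act 1 (l.pt (1 - i - 1)))
      exact (act_cancel hB 1 _).symm
    | ginv =>
      rw [hs] at h2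
      rw [h2]
      show l.pt (1 - i - 1) = B.act 1 (B.act (-1) (l.pt (1 - i - 1)))
      exact (act_cancel' hB 1 _).symm
    | tau =>
      obtain ⟨ha, _⟩ := h1 hs
      rw [hs] at h2
      rw [h2]
      show l.pt (1 - i - 1) = B.tau (B.tau (l.pt (1 - i - 1)))
      exact (hB.tau_invol _ ha).symm

theorem isBand_inv (hB : B.IsBrauer) {l : Line B} (hl : l.IsBand) :
    l.inv.IsBand := by
  obtain ⟨h1, ⟨p, hp, hper⟩, ⟨i0, hi0⟩, h4, h5, h6, h7, h8, h9⟩ := hl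
  have hppt : ∀ i, l.pt (i + p) = l.pt i := periodic_pt hper
  have hpst : ∀ i, l.st (i + p) = l.st i := periodic_st hper
  refine ⟨isLine_inv hB h1, ⟨p, hp, ?_⟩, ⟨1 - i0, ?_⟩, ?_, ?_, ?_, ?_, ?_, ?_⟩
  · refine Line.ext' (fun i => ?_) (fun i => ?_)
    · show l.pt (-(i + p)) = l.pt (-i)
      rw [show -i = -(i + p) + p by ring, hppt]
    · show (l.st (1 - (i + p))).inv = (l.st (1 - i)).inv
      rw [show 1 - i = 1 - (i + p) + p by ring, hpst]
  · show (l.st (1 - (1 - i0))).inv = Step.tau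
    rw [show 1 - (1 - i0) = i0 by ring, hi0]
    rfl
  · -- C4
    intro i hi
    rw [show l.inv.st i = (l.st (1 - i)).inv from rfl, Step.inv_eq_tau] at hi
    show (l.st (1 - (i + 1))).inv ≠ Step.tau
    rw [Ne, Step.inv_eq_tau]
    intro hc
    exact h4 (1 - (i + 1)) hc (by rwa [show 1 - (i + 1) + 1 = 1 - i by ring])
  · -- C5
    intro i hi
    rw [show l.inv.st i = (l.st (1 - i)).inv from rfl, Step.inv_eq_g] at hi
    show (l.st (1 - (i + 1))).inv = Step.g ∨ (l.st (1 - (i + 1))).inv = Step.tau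
    rw [Step.inv_eq_g, Step.inv_eq_tau]
    rcases hc : l.st (1 - (i + 1)) with _ | _ | _
    · exfalso
      rcases h5 (1 - (i + 1)) hc with h | h <;>
        rw [show 1 - (i + 1) + 1 = 1 - i by ring, hi] at h <;> exact Step.noConfusion h
    · exact Or.inl rfl
    · exact Or.inr rfl
  · -- C6
    intro i hi
    rw [show l.inv.st i = (l.st (1 - i)).inv from rfl, Step.inv_eq_ginv] at hi
    show (l.st (1 - (i + 1))).inv = Step.ginv ∨ (l.st (1 - (i + 1))).inv = Step.tau
    rw [Step.inv_eq_ginv, Step.inv_eq_tau]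
    rcases hc : l.st (1 - (i + 1)) with _ | _ | _
    · exact Or.inl rfl
    · exfalso
      rcases h6 (1 - (i + 1)) hc with h | h <;>
        rw [show 1 - (i + 1) + 1 = 1 - i by ring, hi] at h <;> exact Step.noConfusion h
    · exact Or.inr rfl
  · -- C7
    intro i hi hi1
    rw [show l.inv.st i = (l.st (1 - i)).inv from rfl, Step.inv_eq_g] at hi
    rw [show l.inv.st (i + 1) = (l.st (1 - (i + 1))).inv from rfl, Step.inv_eq_tau] at hi1
    show (l.st (1 - (i + 2))).inv = Step.ginv
    rw [Step.inv_eq_ginv]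
    rcases hc : l.st (1 - (i + 2)) with _ | _ | _
    · rfl
    · exfalso
      have := h8 (1 - (i + 2)) hc (by rwa [show 1 - (i + 2) + 1 = 1 - (i + 1) by ring])
      rw [show 1 - (i + 2) + 2 = 1 - i by ring, hi] at this
      exact Step.noConfusion this
    · exfalso
      have := h4 (1 - (i + 2)) hc
      rw [show 1 - (i + 2) + 1 = 1 - (i + 1) by ring] at this
      exact this hi1
  · -- C8
    intro i hi hi1
    rw [show l.inv.st i = (l.st (1 - i)).inv from rfl, Step.inv_eq_ginv] at hi
    rw [show l.inv.st (i + 1) = (l.st (1 - (i + 1))).inv from rfl, Step.inv_eq_tau] at hi1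
    show (l.st (1 - (i + 2))).inv = Step.g
    rw [Step.inv_eq_g]
    rcases hc : l.st (1 - (i + 2)) with _ | _ | _
    · exfalso
      have := h7 (1 - (i + 2)) hc (by rwa [show 1 - (i + 2) + 1 = 1 - (i + 1) by ring])
      rw [show 1 - (i + 2) + 2 = 1 - i by ring, hi] at this
      exact Step.noConfusion this
    · rfl
    · exfalso
      have := h4 (1 - (i + 2)) hc
      rw [show 1 - (i + 2) + 1 = 1 - (i + 1) by ring] at this
      exact this hi1
  · -- C9 (degree condition)
    intro i j hi hj hm
    rw [show l.inv.st i = (l.st (1 - i)).inv from rfl, Step.inv_eq_tau] at hi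
    show j < B.d (l.pt (-i))
    set q : ℤ := 1 - i with hq
    -- non-tau hypothesis in terms of l
    have hm' : ∀ m : ℕ, 0 < m → m ≤ j → l.st (q - m) ≠ Step.tau := by
      intro m hm0 hmj
      have := hm m hm0 hmj
      rw [show l.inv.st (i + m) = (l.st (1 - (i + m))).inv from rfl, Ne,
        Step.inv_eq_tau] at this
      rwa [show q - (m : ℤ) = 1 - (i + m) by rw [hq]; ring]
    -- existence of a previous tau
    have hEx : ∃ m : ℕ, 0 < m ∧ l.st (q - m) = Step.tau := by
      set k : ℕ := (i0 - q).toNat + 1 with hk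
      have hkp : (q : ℤ) - (i0 - k * p) > 0 := by
        have h1 : (i0 - q : ℤ) < k := by
          rw [hk]; push_cast
          have := Int.self_le_toNat (i0 - q)
          omega
        have h2 : (k : ℤ) ≤ k * p := le_mul_of_one_le_right (by positivity) hp
        omega
      refine ⟨(q - (i0 - k * p)).toNat, by omega, ?_⟩
      rw [Int.toNat_of_nonneg (by omega)]
      rw [show q - (q - (i0 - k * p)) = i0 - k * p by ring]
      rw [periodic_st_sub_mul hper i0 k]
      exact hi0
    classical
    set m₀ : ℕ := Nat.find hEx with hm₀
    obtain ⟨hm₀pos, hm₀tau⟩ := Nat.find_spec hEx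
    have hmin : ∀ m : ℕ, m < m₀ → ¬(0 < m ∧ l.st (q - m) = Step.tau) :=
      fun m hmlt => Nat.find_min hEx hmlt
    have hjm : j < m₀ := by
      by_contra hc
      push_neg at hc
      exact hm' m₀ hm₀pos hc hm₀tau
    set p₀ : ℤ := q - m₀ with hp₀
    have hrun : ∀ m : ℕ, 0 < m → m ≤ m₀ - 1 → l.st (p₀ + m) ≠ Step.tau := by
      intro m hm0 hmle
      have h1 : m₀ - m < m₀ := by omega
      have h2 := hmin (m₀ - m) h1
      push_neg at h2
      have h3 := h2 (by omega)
      rwa [show p₀ + (m : ℤ) = q - ((m₀ - m : ℕ) : ℤ) by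
        rw [hp₀]; omega]
    have hlt : m₀ - 1 < B.d (l.pt p₀) :=
      h9 p₀ (m₀ - 1) hm₀tau (by omega) hrun
    have hd : ∀ t : ℕ, t ≤ m₀ - 1 → B.d (l.pt (p₀ + t)) = B.d (l.pt p₀) := by
      intro t
      induction t with
      | zero => intro; simp
      | succ s ih =>
        intro hs
        have ihs := ih (by omega)
        have hns : l.st (p₀ + (s + 1 : ℕ)) ≠ Step.tau := hrun (s + 1) (by omega) hs
        have hline := (h1 (p₀ + (s + 1 : ℕ))).2
        rw [show p₀ + ((s + 1 : ℕ) : ℤ) - 1 = p₀ + s by push_cast; ring] at hline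
        rcases hc : l.st (p₀ + (s + 1 : ℕ)) with _ | _ | _
        · rw [hc] at hline
          rw [hline]
          show B.d (B.act 1 (l.pt (p₀ + s))) = _
          rw [hB.d_act, ihs]
        · rw [hc] at hline
          rw [hline]
          show B.d (B.act (-1) (l.pt (p₀ + s))) = _
          rw [hB.d_act, ihs]
        · exact absurd hc hns
    have hfin : B.d (l.pt (-i)) = B.d (l.pt p₀) := by
      rw [show -i = p₀ + ((m₀ - 1 : ℕ) : ℤ) by
        rw [hp₀, hq]; omega]
      exact hd (m₀ - 1) le_rfl
    omega

end BandAux2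

section MapAux

/-- Push a line forward along a map of half-edges. -/
def mapLine {B C : BrauerData} (f : B.E → C.E) (l : Line B) : Line C :=
  ⟨fun i => f (l.pt i), l.st⟩

variable {B C : BrauerData} {f : B.E → C.E}

theorem isLine_map (hact : ∀ (n : ℤ) (e : B.E), f (B.act n e) = C.act n (f e))
    (hU : ∀ e ∈ B.U, f e ∈ C.U)
    (htau : ∀ e ∈ B.U, f (B.tau e) = C.tau (f e))
    {l : Line B} (hl : l.IsLine) : (mapLine f l).IsLine := by
  intro i
  obtain ⟨h1, h2⟩ := hl i
  refine ⟨fun hs => ?_, ?_⟩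
  · obtain ⟨ha, hb⟩ := h1 hs
    exact ⟨hU _ ha, hU _ hb⟩
  · show f (l.pt i) = C.stepFun (l.st i) (f (l.pt (i - 1)))
    cases hs : l.st i with
    | g => rw [hs] at h2; rw [h2]; exact hact 1 _
    | ginv => rw [hs] at h2; rw [h2]; exact hact (-1) _
    | tau =>
      obtain ⟨ha, _⟩ := h1 hs
      rw [hs] at h2; rw [h2]
      exact htau _ ha

theorem isBand_map (hact : ∀ (n : ℤ) (e : B.E), f (B.act n e) = C.act n (f e))
    (hU : ∀ e ∈ B.U, f e ∈ C.U)
    (htau : ∀ e ∈ B.U, f (B.tau e) = C.tau (f e))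
    (hd : ∀ e, C.d (f e) = B.d e)
    {l : Line B} (hl : l.IsBand) : (mapLine f l).IsBand := by
  obtain ⟨h1, ⟨p, hp, hper⟩, h3, h4, h5, h6, h7, h8, h9⟩ := hl
  refine ⟨isLine_map hact hU htau h1, ⟨p, hp, ?_⟩, h3, h4, h5, h6, h7, h8, ?_⟩
  · refine Line.ext' (fun i => ?_) (fun i => ?_)
    · show f (l.pt (i + p)) = f (l.pt i)
      rw [periodic_pt hper]
    · exact periodic_st hper i
  · intro i j hi hj hm
    have := h9 i j hi hj hm
    show j < C.d (f (l.pt i))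
    rw [hd]
    exact this

theorem mapLine_translate (l : Line B) (n : ℤ) :
    mapLine f (l.translate n) = (mapLine f l).translate n := rfl

theorem mapLine_inv (l : Line B) :
    mapLine f (l.inv) = (mapLine f l).inv := rfl

end MapAux

section QuotAux

variable (B : BrauerData) (Γ : Type) [Group Γ] (ρ : Γ →* Equiv.Perm B.E)
  (hρ : ∀ γ : Γ, IsMorphism B B (ρ γ))

theorem qrel_equiv : Equivalence (fun x y : B.E => ∃ γ : Γ, ρ γ x = y) := by
  constructor
  · exact fun x => ⟨1, by simp⟩
  · rintro x y ⟨γ, rfl⟩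
    refine ⟨γ⁻¹, ?_⟩
    rw [← Equiv.Perm.mul_apply, ← map_mul, inv_mul_cancel, map_one, Equiv.Perm.one_apply]
  · rintro x y z ⟨γ, rfl⟩ ⟨δ, rfl⟩
    exact ⟨δ * γ, by rw [map_mul, Equiv.Perm.mul_apply]⟩

theorem qmk_eq {x y : B.E} :
    Quot.mk (fun x y : B.E => ∃ γ : Γ, ρ γ x = y) x
      = Quot.mk (fun x y : B.E => ∃ γ : Γ, ρ γ x = y) y ↔ ∃ γ : Γ, ρ γ x = y := by
  rw [Quot.eq]
  exact Equivalence.eqvGen_iff (qrel_equiv B Γ ρ)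

theorem qU_mem {e : B.E} :
    (Quot.mk _ e : (quotData B Γ ρ hρ).E) ∈ (quotData B Γ ρ hρ).U ↔ e ∈ B.U := by
  constructor
  · rintro ⟨x, hx, hxe⟩
    obtain ⟨γ, rfl⟩ := (qmk_eq B Γ ρ).mp hxe
    exact (hρ γ).2.1 x hx
  · intro h
    exact ⟨e, h, rfl⟩

open Classical in
theorem qtau_mk {e : B.E} (h : e ∈ B.U) :
    (quotData B Γ ρ hρ).tau (Quot.mk _ e) = Quot.mk _ (B.tau e) := by
  show (if e ∈ B.U then (Quot.mk _ (B.tau e) : (quotData B Γ ρ hρ).E) else Quot.mk _ e)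
      = Quot.mk _ (B.tau e)
  simp [h]

theorem qact_mk (n : ℤ) (e : B.E) :
    (quotData B Γ ρ hρ).act n (Quot.mk _ e) = Quot.mk _ (B.act n e) := rfl

theorem qd_mk (e : B.E) :
    (quotData B Γ ρ hρ).d (Quot.mk _ e) = B.d e := rfl

theorem qact_cancel (hB : B.IsBrauer) (m : ℤ) (x : (quotData B Γ ρ hρ).E) :
    (quotData B Γ ρ hρ).act (-m) ((quotData B Γ ρ hρ).act m x) = x := by
  induction x using Quot.ind with
  | _ e =>
    rw [qact_mk, qact_mk]
    rw [act_act hB, neg_add_cancel, hB.act_zero]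

theorem qact_cancel' (hB : B.IsBrauer) (m : ℤ) (x : (quotData B Γ ρ hρ).E) :
    (quotData B Γ ρ hρ).act m ((quotData B Γ ρ hρ).act (-m) x) = x := by
  induction x using Quot.ind with
  | _ e =>
    rw [qact_mk, qact_mk]
    rw [act_act hB, add_neg_cancel, hB.act_zero]

theorem qtau_invol (hB : B.IsBrauer) {x : (quotData B Γ ρ hρ).E}
    (h : x ∈ (quotData B Γ ρ hρ).U) :
    (quotData B Γ ρ hρ).tau ((quotData B Γ ρ hρ).tau x) = x := by
  obtain ⟨u, hu, rfl⟩ := h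
  rw [qtau_mk B Γ ρ hρ hu, qtau_mk B Γ ρ hρ (hB.tau_mem _ hu), hB.tau_invol _ hu]

/-- The projection of lines to the quotient. -/
noncomputable def projLine (l : Line B) : Line (quotData B Γ ρ hρ) :=
  mapLine (Quot.mk _) l

theorem isLine_proj {l : Line B} (hl : l.IsLine) : (projLine B Γ ρ hρ l).IsLine :=
  isLine_map (C := quotData B Γ ρ hρ) (f := Quot.mk _) (fun _ _ => rfl)
    (fun e he => ⟨e, he, rfl⟩) (fun e he => (qtau_mk B Γ ρ hρ he).symm) hl

theorem isBand_proj {l : Line B} (hl : l.IsBand) : (projLine B Γ ρ hρ l).IsBand :=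
  isBand_map (C := quotData B Γ ρ hρ) (f := Quot.mk _) (fun _ _ => rfl)
    (fun e he => ⟨e, he, rfl⟩) (fun e he => (qtau_mk B Γ ρ hρ he).symm) (fun _ => rfl) hl

end QuotAux

section LiftAux

variable {B : BrauerData}

/-- Forward part of the lift of a line. -/
def liftFwd (B : BrauerData) (st : ℤ → Step) (e₀ : B.E) : ℕ → B.E
  | 0 => e₀
  | k + 1 => B.stepFun (st ((k : ℤ) + 1)) (liftFwd B st e₀ k)

/-- Backward part of the lift of a line. -/
def liftBwd (B : BrauerData) (st : ℤ → Step) (e₀ : B.E) : ℕ → B.E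
  | 0 => e₀
  | k + 1 => prevFun B (st (-(k : ℤ))) (liftBwd B st e₀ k)

/-- The lift of a line, determined by a starting point and the steps. -/
noncomputable def liftLine (B : BrauerData) (st : ℤ → Step) (e₀ : B.E) : Line B :=
  ⟨fun i => if 0 ≤ i then liftFwd B st e₀ i.toNat else liftBwd B st e₀ (-i).toNat, st⟩

theorem liftLine_pt_nonneg (st : ℤ → Step) (e₀ : B.E) {i : ℤ} (h : 0 ≤ i) :
    (liftLine B st e₀).pt i = liftFwd B st e₀ i.toNat := if_pos h

theorem liftLine_pt_nonpos (st : ℤ → Step) (e₀ : B.E) {i : ℤ} (h : i ≤ 0) :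
    (liftLine B st e₀).pt i = liftBwd B st e₀ (-i).toNat := by
  rcases eq_or_lt_of_le h with rfl | hlt
  · show (if (0:ℤ) ≤ 0 then liftFwd B st e₀ (0:ℤ).toNat
        else liftBwd B st e₀ (-(0:ℤ)).toNat) = liftBwd B st e₀ (-(0:ℤ)).toNat
    rw [if_pos le_rfl]
    rfl
  · exact if_neg (by omega)

theorem liftLine_pt_zero (st : ℤ → Step) (e₀ : B.E) :
    (liftLine B st e₀).pt 0 = e₀ :=
  liftLine_pt_nonneg st e₀ le_rfl

/-- The lift satisfies the forward recursion at positive indices. -/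
theorem liftLine_step (st : ℤ → Step) (e₀ : B.E) {i : ℤ} (h : 1 ≤ i) :
    (liftLine B st e₀).pt i = B.stepFun (st i) ((liftLine B st e₀).pt (i - 1)) := by
  rw [liftLine_pt_nonneg st e₀ (by omega : (0:ℤ) ≤ i),
    liftLine_pt_nonneg st e₀ (by omega : (0:ℤ) ≤ i - 1)]
  have h1 : i.toNat = (i - 1).toNat + 1 := by omega
  rw [h1]
  show B.stepFun (st (((i-1).toNat : ℤ) + 1)) _ = _
  rw [show (((i-1).toNat : ℤ) + 1) = i by omega]

/-- The lift satisfies the backward recursion at nonpositive indices. -/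
theorem liftLine_prev (st : ℤ → Step) (e₀ : B.E) {i : ℤ} (h : i ≤ 0) :
    (liftLine B st e₀).pt (i - 1) = prevFun B (st i) ((liftLine B st e₀).pt i) := by
  rw [liftLine_pt_nonpos st e₀ (by omega : i - 1 ≤ 0),
    liftLine_pt_nonpos st e₀ h]
  have h1 : (-(i - 1)).toNat = (-i).toNat + 1 := by omega
  rw [h1]
  show prevFun B (st (-((-i).toNat : ℤ))) _ = _
  rw [show -(((-i).toNat : ℤ)) = i by omega]

variable (B : BrauerData) (Γ : Type) [Group Γ]
  (ρ : Γ →* Equiv.Perm B.E) (hρ : ∀ γ : Γ, IsMorphism B B (ρ γ))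

/-- The lift of a line in the quotient projects back onto it. -/
theorem lift_proj (hB : B.IsBrauer) {l' : Line (quotData B Γ ρ hρ)} (hl' : l'.IsLine)
    {e₀ : B.E} (he₀ : Quot.mk _ e₀ = l'.pt 0) (i : ℤ) :
    Quot.mk _ ((liftLine B l'.st e₀).pt i) = l'.pt i := by
  have fwd : ∀ k : ℕ, Quot.mk _ (liftFwd B l'.st e₀ k) = l'.pt k := by
    intro k
    induction k with
    | zero => exact he₀
    | succ m ih =>
      have hline := (hl' ((m : ℤ) + 1)).2
      rw [add_sub_cancel_right] at hline
      show Quot.mk _ (B.stepFun (l'.st ((m : ℤ) + 1)) (liftFwd B l'.st e₀ m))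
        = l'.pt ((m + 1 : ℕ) : ℤ)
      rw [show ((m + 1 : ℕ) : ℤ) = (m : ℤ) + 1 by push_cast; ring]
      cases hs : l'.st ((m : ℤ) + 1) with
      | g =>
        rw [hs] at hline
        rw [hline]
        show ((quotData B Γ ρ hρ).act 1 (Quot.mk _ (liftFwd B l'.st e₀ m)) : (quotData B Γ ρ hρ).E) = (quotData B Γ ρ hρ).act 1 (l'.pt (m : ℤ))
        rw [ih]
      | ginv =>
        rw [hs] at hline
        rw [hline]
        show ((quotData B Γ ρ hρ).act (-1) (Quot.mk _ (liftFwd B l'.st e₀ m)) : (quotData B Γ ρ hρ).E) = (quotData B Γ ρ hρ).act (-1) (l'.pt (m : ℤ))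
        rw [ih]
      | tau =>
        obtain ⟨ha, _⟩ := (hl' ((m : ℤ) + 1)).1 hs
        rw [add_sub_cancel_right, ← ih] at ha
        have hu : liftFwd B l'.st e₀ m ∈ B.U := (qU_mem B Γ ρ hρ).mp ha
        rw [hs] at hline
        rw [hline, ← ih]
        show Quot.mk _ (B.tau (liftFwd B l'.st e₀ m))
          = (quotData B Γ ρ hρ).tau (Quot.mk _ (liftFwd B l'.st e₀ m))
        rw [qtau_mk B Γ ρ hρ hu]
  have bwd : ∀ k : ℕ, Quot.mk _ (liftBwd B l'.st e₀ k) = l'.pt (-(k : ℤ)) := by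
    intro k
    induction k with
    | zero => simpa [liftBwd] using he₀
    | succ m ih =>
      have hline := (hl' (-(m : ℤ))).2
      show Quot.mk _ (prevFun B (l'.st (-(m : ℤ))) (liftBwd B l'.st e₀ m))
        = l'.pt (-((m + 1 : ℕ) : ℤ))
      rw [show -((m + 1 : ℕ) : ℤ) = -(m : ℤ) - 1 by push_cast; ring]
      cases hs : l'.st (-(m : ℤ)) with
      | g =>
        rw [hs] at hline
        have hkey : ((quotData B Γ ρ hρ).act (-1) (l'.pt (-(m : ℤ))) : (quotData B Γ ρ hρ).E) = l'.pt (-(m : ℤ) - 1) := by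
          rw [hline]
          exact qact_cancel B Γ ρ hρ hB 1 _
        rw [← hkey, ← ih]
        rfl
      | ginv =>
        rw [hs] at hline
        have hkey : ((quotData B Γ ρ hρ).act 1 (l'.pt (-(m : ℤ))) : (quotData B Γ ρ hρ).E) = l'.pt (-(m : ℤ) - 1) := by
          rw [hline]
          exact qact_cancel' B Γ ρ hρ hB 1 _
        rw [← hkey, ← ih]
        rfl
      | tau =>
        obtain ⟨ha, hb⟩ := (hl' (-(m : ℤ))).1 hs
        rw [hs] at hline
        have hu : liftBwd B l'.st e₀ m ∈ B.U := by
          rw [← ih] at hb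
          exact (qU_mem B Γ ρ hρ).mp hb
        have hkey : ((quotData B Γ ρ hρ).tau (l'.pt (-(m : ℤ))) : (quotData B Γ ρ hρ).E) = l'.pt (-(m : ℤ) - 1) := by
          rw [hline]
          exact qtau_invol B Γ ρ hρ hB ha
        rw [← hkey, ← ih]
        show Quot.mk _ (B.tau (liftBwd B l'.st e₀ m))
          = (quotData B Γ ρ hρ).tau (Quot.mk _ (liftBwd B l'.st e₀ m))
        rw [qtau_mk B Γ ρ hρ hu]
  by_cases h : 0 ≤ i
  · rw [liftLine_pt_nonneg l'.st e₀ h, fwd i.toNat, Int.toNat_of_nonneg h]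
  · rw [liftLine_pt_nonpos l'.st e₀ (by omega), bwd (-i).toNat]
    congr 1
    omega

/-- The lift of a line is a line. -/
theorem lift_isLine (hB : B.IsBrauer) {l' : Line (quotData B Γ ρ hρ)} (hl' : l'.IsLine)
    {e₀ : B.E} (he₀ : Quot.mk _ e₀ = l'.pt 0) :
    (liftLine B l'.st e₀).IsLine := by
  have hmem : ∀ i : ℤ, l'.st i = Step.tau →
      (liftLine B l'.st e₀).pt (i - 1) ∈ B.U ∧ (liftLine B l'.st e₀).pt i ∈ B.U := by
    intro i hs
    obtain ⟨ha, hb⟩ := (hl' i).1 hs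
    rw [← lift_proj B Γ ρ hρ hB hl' he₀ (i - 1)] at ha
    rw [← lift_proj B Γ ρ hρ hB hl' he₀ i] at hb
    exact ⟨(qU_mem B Γ ρ hρ).mp ha, (qU_mem B Γ ρ hρ).mp hb⟩
  intro i
  refine ⟨hmem i, ?_⟩
  show (liftLine B l'.st e₀).pt i
    = B.stepFun (l'.st i) ((liftLine B l'.st e₀).pt (i - 1))
  by_cases h : 1 ≤ i
  · exact liftLine_step l'.st e₀ h
  · rw [liftLine_prev l'.st e₀ (by omega : i ≤ 0)]
    cases hs : l'.st i with
    | g => exact (act_cancel' hB 1 _).symm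
    | ginv => exact (act_cancel hB 1 _).symm
    | tau =>
      obtain ⟨_, hb⟩ := hmem i hs
      exact (hB.tau_invol _ hb).symm

/-- The lift of a band is a band. -/
theorem lift_isBand (hB : B.IsBrauer) {l' : Line (quotData B Γ ρ hρ)} (hl' : l'.IsBand)
    {e₀ : B.E} (he₀ : Quot.mk _ e₀ = l'.pt 0) (hΓ : ∀ γ : Γ, 0 < orderOf γ) :
    (liftLine B l'.st e₀).IsBand := by
  obtain ⟨h1, ⟨p, hp, hper⟩, h3, h4, h5, h6, h7, h8, h9⟩ := hl'
  set L := liftLine B l'.st e₀ with hLdef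
  have hLline : L.IsLine := lift_isLine B Γ ρ hρ hB h1 he₀
  have hproj := lift_proj B Γ ρ hρ hB h1 he₀
  -- find γ with ρ γ (L.pt 0) = L.pt p
  have hmk : Quot.mk (fun x y : B.E => ∃ γ : Γ, ρ γ x = y) (L.pt 0)
      = Quot.mk (fun x y : B.E => ∃ γ : Γ, ρ γ x = y) (L.pt p) := by
    have e1 := hproj 0
    have e2 := hproj p
    have e3 : l'.pt p = l'.pt 0 := by
      have := periodic_pt hper 0
      rwa [zero_add] at this
    rw [e1, e2, e3]
  obtain ⟨γ, hγ⟩ := (qmk_eq B Γ ρ).mp hmk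
  -- L.translate p = mapLine (ρ γ) L
  have hmap : ∀ δ : Γ, (mapLine (ρ δ) L).IsLine := fun δ =>
    isLine_map (hρ δ).1 (hρ δ).2.1 (hρ δ).2.2.1 hLline
  have hstep : L.translate p = mapLine (ρ γ) L := by
    refine line_unique hB (isLine_translate hLline p) (hmap γ) (fun i => ?_) ?_
    · show l'.st (i + p) = l'.st i
      exact periodic_st hper i
    · show L.pt (0 + p) = ρ γ (L.pt 0)
      rw [zero_add, hγ]
  have hpow : ∀ k : ℕ, L.translate (k * p) = mapLine (ρ (γ ^ k)) L := by
    intro k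
    induction k with
    | zero =>
      rw [pow_zero, map_one]
      refine Line.ext' (fun i => ?_) (fun i => ?_)
      · show L.pt (i + 0 * p) = (1 : Equiv.Perm B.E) (L.pt i)
        simp
      · show L.st (i + 0 * p) = L.st i
        simp
    | succ k ih =>
      have : ((k : ℤ) + 1) * p = (k : ℤ) * p + p := by ring
      rw [show (((k + 1 : ℕ)) : ℤ) * p = (k : ℤ) * p + p by push_cast; ring,
        ← translate_translate, ih, ← mapLine_translate, hstep]
      refine Line.ext' (fun i => ?_) (fun i => ?_)
      · show ρ (γ ^ k) (ρ γ (L.pt i)) = ρ (γ ^ (k + 1)) (L.pt i)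
        rw [← Equiv.Perm.mul_apply, ← map_mul, ← pow_succ]
      · rfl
  refine ⟨hLline, ⟨(orderOf γ : ℤ) * p, ?_, ?_⟩, h3, h4, h5, h6, h7, h8, ?_⟩
  · have := hΓ γ
    positivity
  · rw [hpow (orderOf γ), pow_orderOf_eq_one, map_one]
    refine Line.ext' (fun i => ?_) (fun i => ?_)
    · show (1 : Equiv.Perm B.E) (L.pt i) = L.pt i
      simp
    · rfl
  · intro i j hi hj hm
    have := h9 i j hi hj hm
    show j < B.d (L.pt i)
    have hdq : (quotData B Γ ρ hρ).d (Quot.mk _ (L.pt i)) = B.d (L.pt i) := rfl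
    rw [← hdq, hproj i]
    exact this

end LiftAux

section FinalAux

variable {B : BrauerData}

/-- The equivalence generated by `BandRel` is translation possibly composed
with inversion. -/
theorem eqvGen_bandRel {a b : {l : Line B // l.IsBand}}
    (h : Relation.EqvGen (fun x y : {l : Line B // l.IsBand} => BandRel B x.1 y.1) a b) :
    ∃ n : ℤ, b.1 = a.1.translate n ∨ b.1 = a.1.inv.translate n := by
  induction h with
  | rel x y hxy =>
    rcases hxy with ⟨n, hn⟩ | hinv
    · exact ⟨n, Or.inl hn⟩
    · exact ⟨0, Or.inr (by rw [hinv, translate_zero])⟩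
  | refl x => exact ⟨0, Or.inl (translate_zero _).symm⟩
  | symm x y _ ih =>
    obtain ⟨n, hn | hn⟩ := ih
    · exact ⟨-n, Or.inl (by rw [hn, translate_translate, add_neg_cancel, translate_zero])⟩
    · refine ⟨n, Or.inr ?_⟩
      rw [hn, inv_translate, inv_inv, translate_translate, neg_add_cancel, translate_zero]
  | trans x y z _ _ ih₁ ih₂ =>
    obtain ⟨n, hn | hn⟩ := ih₁ <;> obtain ⟨m, hm | hm⟩ := ih₂
    · exact ⟨n + m, Or.inl (by rw [hm, hn, translate_translate])⟩
    · refine ⟨-n + m, Or.inr ?_⟩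
      rw [hm, hn, inv_translate, translate_translate]
    · refine ⟨n + m, Or.inr ?_⟩
      rw [hm, hn, translate_translate]
    · refine ⟨-n + m, Or.inl ?_⟩
      rw [hm, hn, inv_translate, inv_inv, translate_translate]

variable (B) (Γ : Type) [Group Γ] (ρ : Γ →* Equiv.Perm B.E)
  (hρ : ∀ γ : Γ, IsMorphism B B (ρ γ))

/-- The map on band classes induced by the quotient projection. -/
noncomputable def projBandMap : BandClasses B → BandClasses (quotData B Γ ρ hρ) :=
  Quot.lift
    (fun l : {l : Line B // l.IsBand} =>
      Quot.mk _ (⟨projLine B Γ ρ hρ l.1, isBand_proj B Γ ρ hρ l.2⟩ :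
        {l : Line (quotData B Γ ρ hρ) // l.IsBand}))
    (by
      intro a b hab
      apply Quot.sound
      rcases hab with ⟨n, hn⟩ | hinv
      · exact Or.inl ⟨n, by
          show projLine B Γ ρ hρ b.1 = (projLine B Γ ρ hρ a.1).translate n
          rw [hn]; rfl⟩
      · exact Or.inr (by
          show projLine B Γ ρ hρ b.1 = (projLine B Γ ρ hρ a.1).inv
          rw [hinv]; rfl))

theorem projBandMap_surjective (hB : B.IsBrauer) (hΓ : ∀ γ : Γ, 0 < orderOf γ) :
    Function.Surjective (projBandMap B Γ ρ hρ) := by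
  intro c
  induction c using Quot.ind with
  | _ l' =>
    obtain ⟨e₀, he₀⟩ := Quot.exists_rep (l'.1.pt 0)
    refine ⟨Quot.mk _ ⟨liftLine B l'.1.st e₀,
      lift_isBand B Γ ρ hρ hB l'.2 he₀ hΓ⟩, ?_⟩
    show Quot.mk _ (⟨projLine B Γ ρ hρ (liftLine B l'.1.st e₀), _⟩ :
      {l : Line (quotData B Γ ρ hρ) // l.IsBand}) = Quot.mk _ l'
    congr 1
    refine Subtype.ext ?_
    refine Line.ext' (fun i => ?_) (fun i => rfl)
    exact lift_proj B Γ ρ hρ hB l'.2.1 he₀ i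

/-- Two bands with the same image class differ by a deck transformation
(up to band equivalence). -/
theorem key_fiber (hB : B.IsBrauer) (a b : {l : Line B // l.IsBand})
    (h : projBandMap B Γ ρ hρ (Quot.mk _ a) = projBandMap B Γ ρ hρ (Quot.mk _ b)) :
    ∃ γ : Γ, (Quot.mk _ (⟨mapLine (ρ γ) a.1,
        isBand_map (hρ γ).1 (hρ γ).2.1 (hρ γ).2.2.1 (hρ γ).2.2.2 a.2⟩ :
        {l : Line B // l.IsBand}) : BandClasses B) = Quot.mk _ b := by
  have h' := (Quot.eq).mp h
  have hR := eqvGen_bandRel h'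
  obtain ⟨n, hn | hn⟩ := hR
  · -- proj b.1 = (proj a.1).translate n = proj (a.1.translate n)
    have hA : projLine B Γ ρ hρ b.1 = projLine B Γ ρ hρ (a.1.translate n) := hn
    have hALine : (a.1.translate n).IsLine := isLine_translate a.2.1 n
    have hst : ∀ i, b.1.st i = (a.1.translate n).st i := fun i =>
      congrFun (congrArg Line.st hA) i
    have hpt0 : Quot.mk (fun x y : B.E => ∃ γ : Γ, ρ γ x = y) ((a.1.translate n).pt 0)
        = Quot.mk _ (b.1.pt 0) :=
      (congrFun (congrArg Line.pt hA) 0).symm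
    obtain ⟨γ, hγ⟩ := (qmk_eq B Γ ρ).mp hpt0
    refine ⟨γ, ?_⟩
    apply Quot.sound
    refine Or.inl ⟨n, ?_⟩
    have : b.1 = mapLine (ρ γ) (a.1.translate n) := by
      refine line_unique hB b.2.1
        (isLine_map (hρ γ).1 (hρ γ).2.1 (hρ γ).2.2.1 hALine) (fun i => hst i) hγ.symm
    rw [this]
    rfl
  · have hA : projLine B Γ ρ hρ b.1 = projLine B Γ ρ hρ (a.1.inv.translate n) := hn
    have hALine : (a.1.inv.translate n).IsLine :=
      isLine_translate (isLine_inv hB a.2.1) n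
    have hst : ∀ i, b.1.st i = (a.1.inv.translate n).st i := fun i =>
      congrFun (congrArg Line.st hA) i
    have hpt0 : Quot.mk (fun x y : B.E => ∃ γ : Γ, ρ γ x = y) ((a.1.inv.translate n).pt 0)
        = Quot.mk _ (b.1.pt 0) :=
      (congrFun (congrArg Line.pt hA) 0).symm
    obtain ⟨γ, hγ⟩ := (qmk_eq B Γ ρ).mp hpt0
    refine ⟨γ, ?_⟩
    have hbeq : b.1 = (mapLine (ρ γ) a.1).inv.translate n := by
      have : b.1 = mapLine (ρ γ) (a.1.inv.translate n) := by
        refine line_unique hB b.2.1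
          (isLine_map (hρ γ).1 (hρ γ).2.1 (hρ γ).2.2.1 hALine) (fun i => hst i) hγ.symm
      rw [this]
      rfl
    have hband : (mapLine (ρ γ) a.1).IsBand :=
      isBand_map (hρ γ).1 (hρ γ).2.1 (hρ γ).2.2.1 (hρ γ).2.2.2 a.2
    refine Quot.eqvGen_sound ?_
    refine Relation.EqvGen.trans _
      (⟨(mapLine (ρ γ) a.1).inv, isBand_inv hB hband⟩ : {l : Line B // l.IsBand}) _
      (Relation.EqvGen.rel _ _ (Or.inr rfl)) ?_
    exact Relation.EqvGen.rel _ _ (Or.inl ⟨n, hbeq⟩)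

end FinalAux

/-- bands under finite quotients.
Let `E` be a Brauer `G`-set and `Π` a finite group of automorphisms of `E` of
order `n` (a finite group `Γ` of order `n` acting faithfully on `E` by automorphisms).
The number of equivalence classes of bands of `E` is finite iff the number of
equivalence classes of bands of `E/Π` is finite, and then
`N_{E/Π} ≤ N_E ≤ n · N_{E/Π}`. -/
theorem band_classes_of_quotient (B : BrauerData) (hB : B.IsBrauer)
    (Γ : Type) [Group Γ] [Fintype Γ] (n : ℕ) (hn : Fintype.card Γ = n)
    (ρ : Γ →* Equiv.Perm B.E) (hinj : Function.Injective ρ)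
    (hρ : ∀ γ : Γ, IsMorphism B B (ρ γ)) :
    (Finite (BandClasses B) ↔ Finite (BandClasses (quotData B Γ ρ hρ))) ∧
    (Finite (BandClasses B) →
      Nat.card (BandClasses (quotData B Γ ρ hρ)) ≤ Nat.card (BandClasses B) ∧
      Nat.card (BandClasses B) ≤ n * Nat.card (BandClasses (quotData B Γ ρ hρ))) := by
  classical
  have hΓ : ∀ γ : Γ, 0 < orderOf γ := fun γ => orderOf_pos γ
  have hsurj := projBandMap_surjective B Γ ρ hρ hB hΓ
  -- construct the (at most n)-to-one covering surjection
  set rep : BandClasses (quotData B Γ ρ hρ) → {l : Line B // l.IsBand} :=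
    fun c => Classical.choose (Quot.exists_rep (Function.surjInv hsurj c)) with hrepdef
  have hrep : ∀ c, (Quot.mk _ (rep c) : BandClasses B) = Function.surjInv hsurj c :=
    fun c => Classical.choose_spec (Quot.exists_rep (Function.surjInv hsurj c))
  set F : Γ × BandClasses (quotData B Γ ρ hρ) → BandClasses B :=
    fun p => Quot.mk _ (⟨mapLine (ρ p.1) (rep p.2).1,
      isBand_map (hρ p.1).1 (hρ p.1).2.1 (hρ p.1).2.2.1 (hρ p.1).2.2.2 (rep p.2).2⟩ :
      {l : Line B // l.IsBand}) with hFdef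
  have hFsurj : Function.Surjective F := by
    intro x
    obtain ⟨b, rfl⟩ := Quot.exists_rep x
    set c := projBandMap B Γ ρ hρ (Quot.mk _ b) with hcdef
    have hc : projBandMap B Γ ρ hρ (Quot.mk _ (rep c))
        = projBandMap B Γ ρ hρ (Quot.mk _ b) := by
      rw [hrep c, Function.surjInv_eq hsurj c]
    obtain ⟨γ, hγ⟩ := key_fiber B Γ ρ hρ hB (rep c) b hc
    exact ⟨(γ, c), hγ⟩
  constructor
  · constructor
    · intro h
      exact Finite.of_surjective _ hsurj
    · intro h
      exact Finite.of_surjective F hFsurj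
  · intro h
    haveI : Finite (BandClasses B) := h
    haveI : Finite (BandClasses (quotData B Γ ρ hρ)) := Finite.of_surjective _ hsurj
    constructor
    · exact Nat.card_le_card_of_surjective _ hsurj
    · calc Nat.card (BandClasses B)
          ≤ Nat.card (Γ × BandClasses (quotData B Γ ρ hρ)) :=
            Nat.card_le_card_of_surjective F hFsurj
        _ = n * Nat.card (BandClasses (quotData B Γ ρ hρ)) := by
            rw [Nat.card_prod, Nat.card_eq_fintype_card, hn]

end FB
end
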